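/- arXiv:1905.08234 — 9 statements merged into one kernel-verified Lean document; each statement's English description precedes it below -/
import Mathlib

section
/- In the winner-bid auction with valuations v_l < v_h (both positive even integers) and bid space {0,1,...,p̄} with p̄ ≥ v_h/2 + 2, in every Nash equilibrium (allowing mixed strategies) the maximal bid in the support of the higher-valuation agent's strategy is at most v_h/2. -/
open Finset Filter

/-- Utility in the winner-bid auction for an agent with value `v` bidding `b`
when the opponent bids `c`: the higher bidder wins the object and pays their own
bid to the other agent; ties are broken uniformly at random. -/
noncomputable def util (v b c : ℕ) : ℝ :=
  if c < b then (v : ℝ) - b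
  else if b < c then (c : ℝ)
  else (((v : ℝ) - b) + b) / 2

/-- Expected utility of bidding `b` against the mixed strategy `σ` of the opponent. -/
noncomputable def eu (pbar v : ℕ) (σ : ℕ → ℝ) (b : ℕ) : ℝ :=
  ∑ c ∈ range (pbar + 1), σ c * util v b c

/-- A mixed strategy on the bid space `{0,...,pbar}`. -/
def IsStrategy (pbar : ℕ) (σ : ℕ → ℝ) : Prop :=
  (∀ b, 0 ≤ σ b) ∧ (∑ b ∈ range (pbar + 1), σ b = 1) ∧ ∀ b, pbar < b → σ b = 0

/-- Nash equilibrium of the winner-bid auction with valuations `vl` (agent l) and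
`vh` (agent h). -/
def IsNash (pbar vl vh : ℕ) (σl σh : ℕ → ℝ) : Prop :=
  IsStrategy pbar σl ∧ IsStrategy pbar σh ∧
  (∀ b ∈ range (pbar + 1), 0 < σl b →
    ∀ b' ∈ range (pbar + 1), eu pbar vl σh b' ≤ eu pbar vl σh b) ∧
  (∀ b ∈ range (pbar + 1), 0 < σh b →
    ∀ b' ∈ range (pbar + 1), eu pbar vh σl b' ≤ eu pbar vh σl b)

/-- Expected payoff of the agent with value `v` playing `σown` against `σopp`. -/
noncomputable def payoff (pbar v : ℕ) (σown σopp : ℕ → ℝ) : ℝ :=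
  ∑ b ∈ range (pbar + 1), σown b * eu pbar v σopp b

/-- Probability that the agent playing `σown` receives the object. -/
noncomputable def winProb (pbar : ℕ) (σown σopp : ℕ → ℝ) : ℝ :=
  ∑ b ∈ range (pbar + 1), ∑ c ∈ range (pbar + 1),
    σown b * σopp c * (if c < b then 1 else if b < c then 0 else 1 / 2)

/-- An equilibrium is efficient if the higher-valuation agent (playing `σh`)
receives the object with probability one, i.e., the lower-valuation agent
receives it with probability zero. -/
def Efficient (pbar : ℕ) (σl σh : ℕ → ℝ) : Prop := winProb pbar σl σh = 0

/-- The pure strategy bidding `b`. -/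
noncomputable def pureS (b : ℕ) : ℕ → ℝ := fun c => if c = b then 1 else 0

/-- Weak payoff monotonicity for the agent with value `v` playing `σown` against `σopp`. -/
def WPMon (pbar v : ℕ) (σown σopp : ℕ → ℝ) : Prop :=
  ∀ m ∈ range (pbar + 1), ∀ n ∈ range (pbar + 1),
    σown n < σown m → eu pbar v σopp n < eu pbar v σopp m

/-- (Full) payoff monotonicity for the agent with value `v`. -/
def PMon (pbar v : ℕ) (σown σopp : ℕ → ℝ) : Prop :=
  ∀ m ∈ range (pbar + 1), ∀ n ∈ range (pbar + 1),
    (eu pbar v σopp n ≤ eu pbar v σopp m ↔ σown n ≤ σown m)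

/-- Empirical equilibrium: a Nash equilibrium that is the pointwise limit of a
sequence of weakly payoff monotone strategy profiles. -/
def IsEmpirical (pbar vl vh : ℕ) (σl σh : ℕ → ℝ) : Prop :=
  IsNash pbar vl vh σl σh ∧
  ∃ s : ℕ → (ℕ → ℝ) × (ℕ → ℝ),
    (∀ n, IsStrategy pbar (s n).1 ∧ IsStrategy pbar (s n).2 ∧
      WPMon pbar vl (s n).1 (s n).2 ∧ WPMon pbar vh (s n).2 (s n).1) ∧
    ∀ b, Tendsto (fun n => (s n).1 b) atTop (nhds (σl b)) ∧
         Tendsto (fun n => (s n).2 b) atTop (nhds (σh b))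

/-!
Shading an overbid is profitable: if `v + 2 ≤ 2 b`, lowering the bid from `b` to `b - 1`
raises the expected utility by at least the probability that the opponent bids at most `b`.
So if agent h bid some `b > v_h / 2` in equilibrium, agent l would never bid at most `b`;
but then agent l bids some `c > b > v_l / 2` in equilibrium, and shading `c` would gain at
least the positive probability that agent h bids `b`.
-/

theorem util_pred_of_lt {v b c : ℕ} (hc : b < c) : util v (b - 1) c = util v b c := by
  have : b - 1 < c := by omega
  simp [util, hc, this, not_lt.mpr hc.le, not_lt.mpr this.le]

theorem util_add_one_le_util_pred {v b c : ℕ} (hb : v + 2 ≤ 2 * b) (hc : c ≤ b) :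
    util v b c + 1 ≤ util v (b - 1) c := by
  have hb' : (v : ℝ) + 2 ≤ 2 * b := by exact_mod_cast hb
  have hpred : ((b - 1 : ℕ) : ℝ) = b - 1 := by rw [Nat.cast_sub (by omega)]; simp
  rcases lt_trichotomy c (b - 1) with h | h | h
  · simp only [util, show c < b by omega, ↓reduceIte, h, hpred]
    linarith
  · subst h
    simp only [util, show b - 1 < b by omega, ↓reduceIte, lt_self_iff_false, hpred,
      sub_add_cancel]
    linarith
  · obtain rfl : c = b := by omega
    simp only [util, lt_self_iff_false, ↓reduceIte, sub_add_cancel,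
      show ¬c < c - 1 by omega, show c - 1 < c by omega]
    linarith

theorem eu_add_sum_le_eu_pred {pbar v b : ℕ} {τ : ℕ → ℝ} (hτ : ∀ c, 0 ≤ τ c)
    (hbp : b ≤ pbar) (hb : v + 2 ≤ 2 * b) :
    eu pbar v τ b + ∑ c ∈ range (b + 1), τ c ≤ eu pbar v τ (b - 1) := by
  have hsplit := fun b' => (sum_range_add_sum_Ico (fun c => τ c * util v b' c)
    (show b + 1 ≤ pbar + 1 by omega)).symm
  rw [eu, eu, hsplit, hsplit, add_right_comm, ← sum_add_distrib]
  refine add_le_add (sum_le_sum fun c hc => ?_) (sum_le_sum fun c hc => ?_)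
  · have := util_add_one_le_util_pred hb (Nat.lt_succ_iff.mp (mem_range.mp hc))
    nlinarith [hτ c]
  · rw [util_pred_of_lt (by simp at hc; omega)]

def IsBestResponse (pbar v : ℕ) (τ : ℕ → ℝ) (b : ℕ) : Prop :=
  ∀ b' ∈ range (pbar + 1), eu pbar v τ b' ≤ eu pbar v τ b

theorem IsBestResponse.eq_zero_of_le {pbar v b : ℕ} {τ : ℕ → ℝ}
    (hbest : IsBestResponse pbar v τ b) (hτ : ∀ c, 0 ≤ τ c) (hbp : b ≤ pbar)
    (hb : v + 2 ≤ 2 * b) {c : ℕ} (hc : c ≤ b) : τ c = 0 := by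
  have hsum : ∑ c ∈ range (b + 1), τ c ≤ 0 := by
    linarith [eu_add_sum_le_eu_pred hτ hbp hb, hbest (b - 1) (mem_range.mpr (by omega))]
  exact le_antisymm
    ((single_le_sum (fun i _ => hτ i) (mem_range.mpr (Nat.lt_succ_of_le hc))).trans hsum) (hτ c)

theorem IsStrategy.le_of_pos {pbar b : ℕ} {σ : ℕ → ℝ} (hσ : IsStrategy pbar σ)
    (hb : 0 < σ b) : b ≤ pbar := by
  by_contra h
  exact hb.ne' (hσ.2.2 b (not_le.mp h))

theorem IsStrategy.exists_pos {pbar : ℕ} {σ : ℕ → ℝ} (hσ : IsStrategy pbar σ) :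
    ∃ c, 0 < σ c := by
  by_contra! h
  have := sum_nonpos fun c (_ : c ∈ range (pbar + 1)) => h c
  linarith [hσ.2.1]

theorem stmt0_general (vl vh pbar : ℕ) (hevh : Even vh)
    (hlt : vl < vh) (σl σh : ℕ → ℝ)
    (hN : IsNash pbar vl vh σl σh) :
    ∀ b, 0 < σh b → b ≤ vh / 2 := by
  obtain ⟨hSl, hSh, hNl, hNh⟩ := hN
  intro b hb
  by_contra! hgt
  have hbp := hSh.le_of_pos hb
  have hvh : vh + 2 ≤ 2 * b := by obtain ⟨k, rfl⟩ := hevh; omega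
  have hlow : ∀ c ≤ b, σl c = 0 := fun _ =>
    IsBestResponse.eq_zero_of_le (hNh b (mem_range.mpr (by omega)) hb) hSl.1 hbp hvh
  obtain ⟨c, hc⟩ := hSl.exists_pos
  have hbc : b < c := by
    by_contra! h
    exact hc.ne' (hlow c h)
  have hcp := hSl.le_of_pos hc
  exact hb.ne' <| IsBestResponse.eq_zero_of_le (hNl c (mem_range.mpr (by omega)) hc) hSh.1 hcp
    (by omega) hbc.le

theorem stmt0 (vl vh pbar : ℕ) (hvl : 0 < vl) (hevl : Even vl) (hevh : Even vh)
    (hlt : vl < vh) (hpbar : vh / 2 + 2 ≤ pbar) (σl σh : ℕ → ℝ)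
    (hN : IsNash pbar vl vh σl σh) :
    ∀ b, 0 < σh b → b ≤ vh / 2 :=
  stmt0_general vl vh pbar hevh hlt σl σh hN
end

section
/- In the winner-bid auction, in every Nash equilibrium the higher-valuation agent's expected payoff is at least v_h/2 and the lower-valuation agent's expected payoff is at least v_l/2. -/
/-!
Bidding half of one's value guarantees half of one's value against every bid of the opponent:
winning leaves `v - v/2 = v/2`, losing to a higher bid `c` pays `c > v/2`, and a tie pays `v/2`
either way. In a Nash equilibrium every bid played with positive probability is a best response,
so it does at least as well as this safe bid, and so does the mixture of them.
-/

open Finset Filter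

lemma le_util_two_mul_self (b c : ℕ) : (b : ℝ) ≤ util (2 * b) b c := by
  unfold util
  push_cast
  split_ifs with _ hlose
  · linarith
  · exact_mod_cast hlose.le
  · linarith

lemma le_eu_two_mul_self (pbar b : ℕ) (σ : ℕ → ℝ) (hσ_nonneg : ∀ c, 0 ≤ σ c)
    (hσ_sum : ∑ c ∈ range (pbar + 1), σ c = 1) : (b : ℝ) ≤ eu pbar (2 * b) σ b :=
  calc (b : ℝ) = ∑ c ∈ range (pbar + 1), σ c * b := by rw [← sum_mul, hσ_sum, one_mul]
    _ ≤ eu pbar (2 * b) σ b :=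
      sum_le_sum fun c _ => mul_le_mul_of_nonneg_left (le_util_two_mul_self b c) (hσ_nonneg c)

lemma le_payoff_of_bestResponse (pbar v : ℕ) (σown σopp : ℕ → ℝ) (x : ℝ) (b₀ : ℕ)
    (hσ_nonneg : ∀ b, 0 ≤ σown b) (hσ_sum : ∑ b ∈ range (pbar + 1), σown b = 1)
    (hb₀ : b₀ ∈ range (pbar + 1)) (hx : x ≤ eu pbar v σopp b₀)
    (hbest : ∀ b ∈ range (pbar + 1), 0 < σown b →
      ∀ b' ∈ range (pbar + 1), eu pbar v σopp b' ≤ eu pbar v σopp b) :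
    x ≤ payoff pbar v σown σopp :=
  calc x = ∑ b ∈ range (pbar + 1), σown b * x := by rw [← sum_mul, hσ_sum, one_mul]
    _ ≤ payoff pbar v σown σopp := by
      refine sum_le_sum fun b hb => ?_
      rcases (hσ_nonneg b).eq_or_lt with hzero | hpos
      · simp [← hzero]
      · exact mul_le_mul_of_nonneg_left (hx.trans (hbest b hb hpos b₀ hb₀)) hpos.le

lemma half_le_payoff_of_bestResponse (pbar v : ℕ) (hv : Even v) (hvp : v / 2 ≤ pbar)
    (σown σopp : ℕ → ℝ) (hown : IsStrategy pbar σown) (hopp : IsStrategy pbar σopp)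
    (hbest : ∀ b ∈ range (pbar + 1), 0 < σown b →
      ∀ b' ∈ range (pbar + 1), eu pbar v σopp b' ≤ eu pbar v σopp b) :
    (v : ℝ) / 2 ≤ payoff pbar v σown σopp := by
  have hsafe : (v : ℝ) / 2 ≤ eu pbar v σopp (v / 2) := by
    have h := le_eu_two_mul_self pbar (v / 2) σopp hopp.1 hopp.2.1
    rwa [Nat.two_mul_div_two_of_even hv, Nat.cast_div hv.two_dvd two_ne_zero, Nat.cast_ofNat] at h
  exact le_payoff_of_bestResponse pbar v σown σopp _ (v / 2) hown.1 hown.2.1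
    (mem_range.2 (by omega)) hsafe hbest

theorem stmt2_general (vl vh pbar : ℕ) (hevl : Even vl) (hevh : Even vh)
    (hle : vl ≤ vh) (hpbar : vh / 2 + 2 ≤ pbar) (σl σh : ℕ → ℝ)
    (hN : IsNash pbar vl vh σl σh) :
    (vl : ℝ) / 2 ≤ payoff pbar vl σl σh ∧ (vh : ℝ) / 2 ≤ payoff pbar vh σh σl := by
  obtain ⟨hσl, hσh, hbest_l, hbest_h⟩ := hN
  have hhalf : vl / 2 ≤ vh / 2 := Nat.div_le_div_right hle
  exact ⟨half_le_payoff_of_bestResponse pbar vl hevl (by omega) σl σh hσl hσh hbest_l,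
    half_le_payoff_of_bestResponse pbar vh hevh (by omega) σh σl hσh hσl hbest_h⟩

theorem stmt2 (vl vh pbar : ℕ) (hvl : 0 < vl) (hevl : Even vl) (hevh : Even vh)
    (hle : vl ≤ vh) (hpbar : vh / 2 + 2 ≤ pbar) (σl σh : ℕ → ℝ)
    (hN : IsNash pbar vl vh σl σh) :
    (vl : ℝ) / 2 ≤ payoff pbar vl σl σh ∧ (vh : ℝ) / 2 ≤ payoff pbar vh σh σl :=
  stmt2_general vl vh pbar hevl hevh hle hpbar σl σh hN
end

section
/- In the winner-bid auction with valuations v_l < v_h, every efficient Nash equilibrium σ (one in which the higher-valuation agent receives the object with probability one) has the higher-valuation agent playing a pure bid p ∈ {v_l/2,...,v_h/2}, yielding payoffs π_l = p and π_h = v_h − p. -/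
open Finset Filter

/-!
Efficiency means that every bid in the support of the low agent's strategy lies strictly below
every bid in the support of the high agent's. So the high agent always wins and pays its bid `b`;
its payoff `vh - b` strictly decreases in `b`, and indifference across its support forces a pure
bid `p`. The low agent always loses and collects `p`; matching `p` would give it `vl / 2`, so
`vl ≤ 2 * p`. Undercutting to `p - 1` still wins for the high agent except on a tie at `p - 1`,
where it gets `vh / 2` instead of `vh - p + 1`; this is no better than `vh - p` only if
`vh / 2 ≤ vh - p`.
-/

namespace IsStrategy

variable {pbar : ℕ} {σ : ℕ → ℝ}

theorem mem_range_of_pos (hσ : IsStrategy pbar σ) {b : ℕ} (hb : 0 < σ b) :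
    b ∈ range (pbar + 1) :=
  mem_range.2 <| Nat.lt_succ_of_le <| not_lt.1 fun h => hb.ne' (hσ.2.2 b h)

theorem exists_pos_s5 (hσ : IsStrategy pbar σ) : ∃ b ∈ range (pbar + 1), 0 < σ b :=
  exists_lt_of_sum_lt <| by simp [hσ.2.1]

theorem le_one (hσ : IsStrategy pbar σ) (b : ℕ) : σ b ≤ 1 := by
  by_cases hb : b ∈ range (pbar + 1)
  · exact hσ.2.1 ▸ single_le_sum (fun c _ => hσ.1 c) hb
  · simp [hσ.2.2 b (by simpa [Nat.lt_succ_iff] using hb)]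

theorem sum_mul_eq_of_support {f : ℕ → ℝ} {x : ℝ} (hσ : IsStrategy pbar σ)
    (hf : ∀ b, 0 < σ b → f b = x) : ∑ b ∈ range (pbar + 1), σ b * f b = x := by
  have hfx : ∀ b ∈ range (pbar + 1), σ b * f b = σ b * x := fun b _ => by
    rcases (hσ.1 b).eq_or_lt with hb | hb
    · rw [← hb, zero_mul, zero_mul]
    · rw [hf b hb]
  rw [sum_congr rfl hfx, ← sum_mul, hσ.2.1, one_mul]

theorem eq_one_of_support {p : ℕ} (hσ : IsStrategy pbar σ) (hp : ∀ b, 0 < σ b → b = p) :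
    σ p = 1 := by
  rw [← hσ.2.1, sum_eq_single p (fun b _ hbp => ?_) (fun hp' => ?_)]
  · exact ((hσ.1 b).eq_or_lt.resolve_right fun hb => hbp (hp b hb)).symm
  · exact hσ.2.2 p (by simpa [Nat.lt_succ_iff] using hp')

theorem eu_eq_util_of_support {p : ℕ} (hσ : IsStrategy pbar σ) (hp : ∀ c, 0 < σ c → c = p)
    (v b : ℕ) : eu pbar v σ b = util v b p :=
  hσ.sum_mul_eq_of_support fun c hc => by rw [hp c hc]

theorem eu_eq_of_support_lt {b : ℕ} (hσ : IsStrategy pbar σ) (hb : ∀ c, 0 < σ c → c < b)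
    (v : ℕ) : eu pbar v σ b = v - b :=
  hσ.sum_mul_eq_of_support fun c hc => if_pos (hb c hc)

/-- Bidding the top `b` of the opponent's support wins outright except on a tie at `b`,
where the payoff is `v / 2` instead of `v - b`. -/
theorem eu_eq_of_support_le {b : ℕ} (hσ : IsStrategy pbar σ) (hb : ∀ c, 0 < σ c → c ≤ b)
    (v : ℕ) : eu pbar v σ b = v - b - σ b * (v / 2 - b) := by
  have hutil : ∀ c ∈ range (pbar + 1), σ c * util v b c
      = σ c * (v - b) - if c = b then σ b * (v / 2 - b) else 0 := fun c _ => by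
    rcases (hσ.1 c).eq_or_lt with hc | hc
    · split_ifs with hcb
      · subst hcb
        rw [← hc]
        ring
      · rw [← hc]
        ring
    · rcases (hb c hc).lt_or_eq with hcb | rfl
      · simp [util, hcb, hcb.ne]
      · simp only [util, lt_irrefl, if_false, if_true]
        ring
  rw [eu, sum_congr rfl hutil, sum_sub_distrib, ← sum_mul, hσ.2.1, one_mul, sum_ite_eq']
  split_ifs with hmem
  · rfl
  · rw [hσ.2.2 b (by simpa [Nat.lt_succ_iff] using hmem)]
    ring

end IsStrategy

theorem lt_of_winProb_eq_zero {pbar : ℕ} {σ τ : ℕ → ℝ} (hσ : IsStrategy pbar σ)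
    (hτ : IsStrategy pbar τ) (h : winProb pbar σ τ = 0) {b c : ℕ} (hb : 0 < σ b)
    (hc : 0 < τ c) : b < c := by
  have hterm_nonneg : ∀ x y, (0 : ℝ) ≤
      σ x * τ y * (if y < x then 1 else if x < y then 0 else 1 / 2) := fun x y =>
    mul_nonneg (mul_nonneg (hσ.1 x) (hτ.1 y)) (by split_ifs <;> norm_num)
  have hrow := (sum_eq_zero_iff_of_nonneg fun x _ => sum_nonneg fun y _ =>
    hterm_nonneg x y).1 h b (hσ.mem_range_of_pos hb)
  have hterm := (sum_eq_zero_iff_of_nonneg fun y _ => hterm_nonneg b y).1 hrow c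
    (hτ.mem_range_of_pos hc)
  by_contra hbc
  rw [if_neg hbc] at hterm
  split_ifs at hterm <;> nlinarith [mul_pos hb hc]

namespace IsNash

variable {pbar vl vh : ℕ} {σl σh : ℕ → ℝ}

theorem eu_high_eq (hN : IsNash pbar vl vh σl σh) (hEff : Efficient pbar σl σh) {p : ℕ}
    (hp : 0 < σh p) : eu pbar vh σl p = vh - p :=
  hN.1.eu_eq_of_support_lt (fun _ hc => lt_of_winProb_eq_zero hN.1 hN.2.1 hEff hc hp) vh

theorem eq_of_pos_high (hN : IsNash pbar vl vh σl σh) (hEff : Efficient pbar σl σh) {b c : ℕ}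
    (hb : 0 < σh b) (hc : 0 < σh c) : b = c := by
  have hbc := hN.2.2.2 b (hN.2.1.mem_range_of_pos hb) hb c (hN.2.1.mem_range_of_pos hc)
  have hcb := hN.2.2.2 c (hN.2.1.mem_range_of_pos hc) hc b (hN.2.1.mem_range_of_pos hb)
  rw [hN.eu_high_eq hEff hb, hN.eu_high_eq hEff hc] at hbc hcb
  exact_mod_cast (show (b : ℝ) = c by linarith)

theorem eu_low_eq (hN : IsNash pbar vl vh σl σh) (hEff : Efficient pbar σl σh) {p : ℕ}
    (hp : 0 < σh p) (b : ℕ) : eu pbar vl σh b = util vl b p :=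
  hN.2.1.eu_eq_util_of_support (fun _ hc => hN.eq_of_pos_high hEff hc hp) vl b

theorem low_le_two_mul (hN : IsNash pbar vl vh σl σh) (hEff : Efficient pbar σl σh) {p : ℕ}
    (hp : 0 < σh p) : vl ≤ 2 * p := by
  obtain ⟨q, hq_mem, hq⟩ := hN.1.exists_pos_s5
  have hqp : q < p := lt_of_winProb_eq_zero hN.1 hN.2.1 hEff hq hp
  have hbr := hN.2.2.1 q hq_mem hq p (hN.2.1.mem_range_of_pos hp)
  rw [hN.eu_low_eq hEff hp, hN.eu_low_eq hEff hp] at hbr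
  simp only [util, lt_irrefl, if_false, not_lt.2 hqp.le, hqp, if_true] at hbr
  exact_mod_cast (show (vl : ℝ) ≤ 2 * p by linarith)

theorem two_mul_le_high (hN : IsNash pbar vl vh σl σh) (hEff : Efficient pbar σl σh) {p : ℕ}
    (hp : 0 < σh p) : 2 * p ≤ vh := by
  obtain ⟨q, -, hq⟩ := hN.1.exists_pos_s5
  obtain ⟨b, rfl⟩ := Nat.exists_eq_add_one.2
    ((Nat.zero_le q).trans_lt (lt_of_winProb_eq_zero hN.1 hN.2.1 hEff hq hp))
  have hsupp : ∀ c, 0 < σl c → c ≤ b := fun c hc =>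
    Nat.lt_succ_iff.1 (lt_of_winProb_eq_zero hN.1 hN.2.1 hEff hc hp)
  have hbr := hN.2.2.2 (b + 1) (hN.2.1.mem_range_of_pos hp) hp b
    (mem_range.2 (by have := mem_range.1 (hN.2.1.mem_range_of_pos hp); omega))
  rw [hN.1.eu_eq_of_support_le hsupp, hN.eu_high_eq hEff hp] at hbr
  have hL0 := hN.1.1 b
  have hL1 := hN.1.le_one b
  have hgap : (1 : ℝ) ≤ vh / 2 - b := by
    push_cast at hbr
    by_contra! hlt
    rcases le_or_gt 0 ((vh : ℝ) / 2 - b) with hx | hx <;> nlinarith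
  exact_mod_cast (show (2 * (b + 1) : ℝ) ≤ vh by linarith)

end IsNash

theorem stmt5_general (vl vh pbar : ℕ) (σl σh : ℕ → ℝ)
    (hN : IsNash pbar vl vh σl σh) (hEff : Efficient pbar σl σh) :
    ∃ p : ℕ, vl / 2 ≤ p ∧ p ≤ vh / 2 ∧ σh p = 1 ∧
      payoff pbar vl σl σh = (p : ℝ) ∧ payoff pbar vh σh σl = (vh : ℝ) - p := by
  obtain ⟨p, -, hp⟩ := hN.2.1.exists_pos_s5
  have hsupp_h : ∀ c, 0 < σh c → c = p := fun c hc => hN.eq_of_pos_high hEff hc hp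
  refine ⟨p, Nat.div_le_of_le_mul (hN.low_le_two_mul hEff hp),
    (Nat.le_div_iff_mul_le two_pos).2 (by linarith [hN.two_mul_le_high hEff hp]),
    hN.2.1.eq_one_of_support hsupp_h, ?_, ?_⟩
  · refine hN.1.sum_mul_eq_of_support fun b hb => ?_
    have hbp := lt_of_winProb_eq_zero hN.1 hN.2.1 hEff hb hp
    rw [hN.eu_low_eq hEff hp, util, if_neg (not_lt.2 hbp.le), if_pos hbp]
  · exact hN.2.1.sum_mul_eq_of_support fun b hb => by rw [hsupp_h b hb, hN.eu_high_eq hEff hp]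

theorem stmt5 (vl vh pbar : ℕ) (hvl : 0 < vl) (hevl : Even vl) (hevh : Even vh)
    (hlt : vl < vh) (hpbar : vh / 2 + 2 ≤ pbar) (σl σh : ℕ → ℝ)
    (hN : IsNash pbar vl vh σl σh) (hEff : Efficient pbar σl σh) :
    ∃ p : ℕ, vl / 2 ≤ p ∧ p ≤ vh / 2 ∧ σh p = 1 ∧
      payoff pbar vl σl σh = (p : ℝ) ∧ payoff pbar vh σh σl = (vh : ℝ) - p :=
  stmt5_general vl vh pbar σl σh hN hEff
end

section
/- In the winner-bid auction with valuations v_l < v_h, for every integer t ∈ {0,1,...,(v_h − v_l)/2}, the pure strategy profile in which the lower-valuation agent bids v_l/2 + t − 1 and the higher-valuation agent bids v_l/2 + t is a Nash equilibrium, with payoffs (v_l/2 + t, v_h/2 + (v_h−v_l)/2 − t). -/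
open Finset Filter

/-! Bidding `c + 1` against `c` wins the object at price `c + 1`. With `vl ≤ 2 (c + 1)` the low agent
prefers being paid `c + 1` to winning (overbidding leaves at most `vl - (c + 2) < c + 1`) or tying
(`vl / 2`); with `2 (c + 1) ≤ vh` the high agent prefers winning at `c + 1` to every alternative,
and among winning bids the lowest is best. Choosing `c + 1 = vl / 2 + t` gives the theorem. -/

section Util

variable {v b c : ℕ}

lemma util_of_lt (h : b < c) : util v b c = c := by
  simp [util, h, h.not_gt]

lemma util_of_gt (h : c < b) : util v b c = v - b :=
  if_pos h

lemma util_self : util v b b = v / 2 := by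
  simp [util]

lemma util_le_of_le_two_mul (h : v ≤ 2 * c) (b : ℕ) : util v b c ≤ c := by
  rcases lt_trichotomy b c with hbc | rfl | hcb
  · rw [util_of_lt hbc]
  · rw [util_self]
    have : (v : ℝ) ≤ 2 * b := by exact_mod_cast h
    linarith
  · rw [util_of_gt hcb]
    have : (v : ℝ) ≤ c + b := by exact_mod_cast (by omega : v ≤ c + b)
    linarith

lemma util_le_sub_succ (h : 2 * (c + 1) ≤ v) (b : ℕ) : util v b c ≤ v - (c + 1) := by
  rcases lt_trichotomy b c with hbc | rfl | hcb
  · rw [util_of_lt hbc]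
    have : (c : ℝ) + (c + 1) ≤ v := by exact_mod_cast (by omega : c + (c + 1) ≤ v)
    linarith
  · rw [util_self]
    have : 2 * ((b : ℝ) + 1) ≤ v := by exact_mod_cast h
    linarith
  · rw [util_of_gt hcb]
    have : (c : ℝ) + 1 ≤ b := by exact_mod_cast hcb
    linarith

end Util

section PureStrategies

variable {pbar b c : ℕ}

lemma pureS_isStrategy (h : b ≤ pbar) : IsStrategy pbar (pureS b) := by
  refine ⟨fun c => by unfold pureS; split_ifs <;> norm_num, ?_, fun c hc => if_neg (by omega)⟩
  simp [pureS, Nat.lt_succ_iff.mpr h]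

lemma eq_of_pureS_pos (h : 0 < pureS b c) : c = b := by
  by_contra hcb
  simp [pureS, hcb] at h

lemma eu_pureS (v b : ℕ) (h : c ≤ pbar) : eu pbar v (pureS c) b = util v b c := by
  simp [eu, pureS, Nat.lt_succ_iff.mpr h]

lemma payoff_pureS (v : ℕ) (σ : ℕ → ℝ) (h : b ≤ pbar) :
    payoff pbar v (pureS b) σ = eu pbar v σ b := by
  simp [payoff, pureS, Nat.lt_succ_iff.mpr h]

lemma isNash_pureS {vl vh bl bh : ℕ} (hl : bl ≤ pbar) (hh : bh ≤ pbar)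
    (hbest_l : ∀ b, util vl b bh ≤ util vl bl bh) (hbest_h : ∀ b, util vh b bl ≤ util vh bh bl) :
    IsNash pbar vl vh (pureS bl) (pureS bh) := by
  refine ⟨pureS_isStrategy hl, pureS_isStrategy hh, ?_, ?_⟩
  · rintro b - hb b' -
    rw [eq_of_pureS_pos hb, eu_pureS _ _ hh, eu_pureS _ _ hh]
    exact hbest_l b'
  · rintro b - hb b' -
    rw [eq_of_pureS_pos hb, eu_pureS _ _ hl, eu_pureS _ _ hl]
    exact hbest_h b'

end PureStrategies

lemma isNash_pureS_succ {pbar vl vh c : ℕ} (hl : vl ≤ 2 * (c + 1)) (hh : 2 * (c + 1) ≤ vh)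
    (hc : c + 1 ≤ pbar) : IsNash pbar vl vh (pureS c) (pureS (c + 1)) := by
  refine isNash_pureS (by omega) hc (fun b => ?_) (fun b => ?_)
  · rw [util_of_lt c.lt_succ_self]
    exact_mod_cast util_le_of_le_two_mul hl b
  · rw [util_of_gt c.lt_succ_self]
    exact_mod_cast util_le_sub_succ hh b

theorem stmt6 (vl vh pbar : ℕ) (hvl : 4 ≤ vl) (hevl : Even vl) (hevh : Even vh)
    (hlt : vl < vh) (hpbar : vh / 2 + 2 ≤ pbar) (t : ℕ) (ht : t ≤ (vh - vl) / 2) :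
    IsNash pbar vl vh (pureS (vl / 2 + t - 1)) (pureS (vl / 2 + t)) ∧
    payoff pbar vl (pureS (vl / 2 + t - 1)) (pureS (vl / 2 + t)) = ((vl / 2 + t : ℕ) : ℝ) ∧
    payoff pbar vh (pureS (vl / 2 + t)) (pureS (vl / 2 + t - 1)) =
      ((vh / 2 + ((vh - vl) / 2 - t) : ℕ) : ℝ) := by
  obtain ⟨a, rfl⟩ := hevl
  obtain ⟨d, rfl⟩ := hevh
  set c := (a + a) / 2 + t - 1
  have hc : (a + a) / 2 + t = c + 1 := by omega
  have hc_le : c + 1 ≤ pbar := by omega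
  have hpay_h : (d + d) / 2 + ((d + d - (a + a)) / 2 - t) = d + d - (c + 1) := by omega
  rw [hc, hpay_h, Nat.cast_sub (by omega)]
  refine ⟨isNash_pureS_succ (by omega) (by omega) hc_le, ?_, ?_⟩
  · rw [payoff_pureS _ _ (by omega), eu_pureS _ _ hc_le, util_of_lt c.lt_succ_self]
  · rw [payoff_pureS _ _ hc_le, eu_pureS _ _ (by omega), util_of_gt c.lt_succ_self]
end

section
/- In the winner-bid auction, in any Nash equilibrium whose separating bid p satisfies p ≥ v_l/2 + 1, the probability σ_l(p−1) that the lower-valuation agent bids p−1 satisfies σ_l(p−1) ≥ 1/(v_h/2 − p + 1). -/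
open Finset Filter

/-! Bidding `b` instead of `b + 1` gains one unit against every lower bid `c < b` and gains
`b + 1 - v / 2` against `c ∈ {b, b + 1}`. In the equilibrium this makes `p` strictly worse than
`p - 1` for the lower agent (as `p > v_l / 2`), so `σ_l(p) = 0`. For the higher agent, who bids
`p`, the deviation to `p - 1` then gains `(1 - σ_l(p - 1)) + σ_l(p - 1) (p - v_h / 2)`, which
must be non-positive: `1 ≤ σ_l(p - 1) (v_h / 2 - p + 1)`. -/

lemma util_sub_util_succ (v b c : ℕ) :
    util v b c - util v (b + 1) c =
      if c < b then 1 else if c ≤ b + 1 then (b + 1 : ℝ) - v / 2 else 0 := by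
  obtain hc | rfl | rfl | hc : c < b ∨ c = b ∨ c = b + 1 ∨ b + 1 < c := by omega
  all_goals unfold util; split_ifs <;> first | omega | (push_cast; ring)

lemma eu_sub_eu_succ {pbar v b : ℕ} (σ : ℕ → ℝ) (hb : b + 1 ≤ pbar) :
    eu pbar v σ b - eu pbar v σ (b + 1) =
      ∑ c ∈ range b, σ c + (σ b + σ (b + 1)) * ((b + 1 : ℝ) - v / 2) := by
  obtain ⟨k, rfl⟩ := Nat.exists_eq_add_of_le hb
  simp only [eu, ← sum_sub_distrib, ← mul_sub, util_sub_util_succ]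
  rw [show b + 1 + k + 1 = b + 2 + k by omega, sum_range_add, sum_range_succ, sum_range_succ]
  have hlow : ∑ c ∈ range b, σ c *
      (if c < b then (1 : ℝ) else if c ≤ b + 1 then (b + 1 : ℝ) - v / 2 else 0) =
      ∑ c ∈ range b, σ c :=
    sum_congr rfl fun c hc => by rw [if_pos (mem_range.1 hc), mul_one]
  have hhigh : ∑ c ∈ range k, σ (b + 2 + c) * (if b + 2 + c < b then (1 : ℝ)
      else if b + 2 + c ≤ b + 1 then (b + 1 : ℝ) - v / 2 else 0) = 0 :=
    sum_eq_zero fun c _ => by rw [if_neg (by omega), if_neg (by omega), mul_zero]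
  rw [hlow, hhigh, if_neg (lt_irrefl b), if_pos (by omega), if_neg (by omega), if_pos le_rfl]
  ring

lemma IsStrategy.sum_range_eq_one_sub {pbar b : ℕ} {σ : ℕ → ℝ} (hσ : IsStrategy pbar σ)
    (hb : b ≤ pbar) (hσb : ∀ c, b < c → σ c = 0) : ∑ c ∈ range b, σ c = 1 - σ b := by
  have h : ∑ c ∈ range (b + 1), σ c = ∑ c ∈ range (pbar + 1), σ c :=
    sum_subset (range_subset_range.2 (by omega)) fun c _ hc => hσb c (by simpa using hc)
  rw [sum_range_succ, hσ.2.1] at h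
  linarith

lemma IsStrategy.eq_zero_of_forall_pos {pbar c : ℕ} {σ : ℕ → ℝ} {P : ℕ → Prop}
    (hσ : IsStrategy pbar σ) (hP : ∀ b, 0 < σ b → P b) (hc : ¬P c) : σ c = 0 :=
  (hσ.1 c).antisymm' (not_lt.1 fun h => hc (hP c h))

section Separating

variable {pbar vl vh b : ℕ} {σl σh : ℕ → ℝ}

lemma IsNash.lower_eq_zero_at_separating (hN : IsNash pbar vl vh σl σh)
    (hseph : ∀ c, 0 < σh c → b + 1 ≤ c) (hp : 0 < σh (b + 1)) (hb : b + 1 ≤ pbar)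
    (hvl : (vl : ℝ) < 2 * (b + 1)) : σl (b + 1) = 0 := by
  have hσh_low : ∀ c, c < b + 1 → σh c = 0 := fun c hc =>
    hN.2.1.eq_zero_of_forall_pos hseph (by omega)
  have hdev : eu pbar vl σh (b + 1) < eu pbar vl σh b := by
    rw [← sub_pos, eu_sub_eu_succ σh hb,
      sum_eq_zero fun c hc => hσh_low c (by simp at hc; omega), hσh_low b (by omega)]
    nlinarith
  exact (hN.1.1 _).antisymm' (not_lt.1 fun h =>
    (hN.2.2.1 _ (mem_range.2 (by omega)) h b (mem_range.2 (by omega))).not_gt hdev)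

lemma IsNash.one_le_mul_at_separating (hN : IsNash pbar vl vh σl σh)
    (hσl : ∀ c, b < c → σl c = 0) (hp : 0 < σh (b + 1)) (hb : b + 1 ≤ pbar) :
    1 ≤ σl b * ((vh : ℝ) / 2 - b) := by
  have hdev := sub_nonpos.2 (hN.2.2.2 _ (mem_range.2 (by omega)) hp b (mem_range.2 (by omega)))
  rw [eu_sub_eu_succ σl hb, hN.1.sum_range_eq_one_sub (by omega) hσl, hσl (b + 1) (by omega)]
    at hdev
  linarith

end Separating

theorem stmt9_general (vl vh pbar : ℕ) (hevh : Even vh) (σl σh : ℕ → ℝ)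
    (hN : IsNash pbar vl vh σl σh) (p : ℕ)
    (hsepl : ∀ b, 0 < σl b → b ≤ p) (hseph : ∀ b, 0 < σh b → p ≤ b)
    (hp : 0 < σh p) (hp1 : vl / 2 + 1 ≤ p) :
    1 / (((vh / 2 : ℕ) : ℝ) - (p : ℝ) + 1) ≤ σl (p - 1) := by
  obtain ⟨b, rfl⟩ : ∃ b, p = b + 1 := ⟨p - 1, by omega⟩
  have hb : b + 1 ≤ pbar := not_lt.1 fun h => hp.ne' (hN.2.1.2.2 _ h)
  have hσl_p : σl (b + 1) = 0 :=
    hN.lower_eq_zero_at_separating hseph hp hb (by exact_mod_cast (by omega : vl < 2 * (b + 1)))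
  have hσl_high : ∀ c, b < c → σl c = 0 := fun c hc => by
    obtain rfl | hc := eq_or_lt_of_le (Nat.succ_le_of_lt hc)
    · exact hσl_p
    · exact hN.1.eq_zero_of_forall_pos hsepl (by omega)
  have hmain := hN.one_le_mul_at_separating hσl_high hp hb
  have hvh : ((vh / 2 : ℕ) : ℝ) = vh / 2 := Nat.cast_div_charZero (even_iff_two_dvd.1 hevh)
  rw [Nat.add_sub_cancel, hvh, Nat.cast_succ, sub_add_eq_sub_sub, sub_add_cancel,
    div_le_iff₀ (pos_of_mul_pos_right (one_pos.trans_le hmain) (hN.1.1 b))]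
  linarith

theorem stmt9 (vl vh pbar : ℕ) (hvl : 0 < vl) (hevl : Even vl) (hevh : Even vh)
    (hlt : vl < vh) (hpbar : vh / 2 + 2 ≤ pbar) (σl σh : ℕ → ℝ)
    (hN : IsNash pbar vl vh σl σh) (p : ℕ)
    (hsepl : ∀ b, 0 < σl b → b ≤ p) (hseph : ∀ b, 0 < σh b → p ≤ b)
    (hp : 0 < σh p) (hp1 : vl / 2 + 1 ≤ p) (hp2 : p ≤ vh / 2) :
    1 / (((vh / 2 : ℕ) : ℝ) - (p : ℝ) + 1) ≤ σl (p - 1) :=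
  stmt9_general vl vh pbar hevh σl σh hN p hsepl hseph hp hp1
end

section
/- Let σ be a weakly payoff monotone strategy profile for the winner-bid auction game with valuations v_l < v_h, and let p ≥ v_l/2 + 2 be an integer. If for the lower-valuation agent every bid b ∈ {v_l/2 − 1, ..., p−2} has expected utility at least that of p−1, then σ_l(p−1) ≤ 1/(p − v_l/2 + 1). -/
open Finset Filter

/- Weak payoff monotonicity forces σ_l(p−1) ≤ σ_l(b) for each of the bids b ∈ {v_l/2 − 1, …, p−2}
that are weakly better than p−1. Together with p−1 itself these are p − v_l/2 + 1 bids, each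
carrying at least the mass σ_l(p−1), and the total mass is at most 1. -/

theorem WPMon.apply_le_of_eu_le {pbar v : ℕ} {σown σopp : ℕ → ℝ} (h : WPMon pbar v σown σopp)
    {m n : ℕ} (hm : m ∈ range (pbar + 1)) (hn : n ∈ range (pbar + 1))
    (heu : eu pbar v σopp m ≤ eu pbar v σopp n) : σown m ≤ σown n :=
  not_lt.mp fun hlt => (h m hm n hn hlt).not_ge heu

theorem IsStrategy.card_mul_le_one {pbar : ℕ} {σ : ℕ → ℝ} (hσ : IsStrategy pbar σ)
    {s : Finset ℕ} (hs : s ⊆ range (pbar + 1)) {x : ℝ} (hx : ∀ b ∈ s, x ≤ σ b) :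
    (#s : ℝ) * x ≤ 1 :=
  calc (#s : ℝ) * x = #s • x := (nsmul_eq_mul _ _).symm
    _ ≤ ∑ b ∈ s, σ b := card_nsmul_le_sum s σ x hx
    _ ≤ ∑ b ∈ range (pbar + 1), σ b :=
      sum_le_sum_of_subset_of_nonneg hs fun b _ _ => hσ.1 b
    _ = 1 := hσ.2.1

theorem stmt11_general (vl vh pbar : ℕ) (hvl : 0 < vl) (hevl : Even vl)
    (hpbar : vh / 2 + 2 ≤ pbar) (σl σh : ℕ → ℝ)
    (hSl : IsStrategy pbar σl)
    (hmon : WPMon pbar vl σl σh) (p : ℕ)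
    (hp1 : vl / 2 + 2 ≤ p) (hp2 : p ≤ vh / 2)
    (hbetter : ∀ b, vl / 2 - 1 ≤ b → b ≤ p - 2 →
      eu pbar vl σh (p - 1) ≤ eu pbar vl σh b) :
    σl (p - 1) ≤ 1 / ((p : ℝ) - ((vl / 2 : ℕ) : ℝ) + 1) := by
  have hk : 1 ≤ vl / 2 := by obtain ⟨m, rfl⟩ := hevl; omega
  have hsub : Icc (vl / 2 - 1) (p - 1) ⊆ range (pbar + 1) := fun b hb => by
    simp only [mem_Icc, mem_range] at hb ⊢; omega
  have hmin : ∀ b ∈ Icc (vl / 2 - 1) (p - 1), σl (p - 1) ≤ σl b := by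
    intro b hb
    rcases (mem_Icc.mp hb).2.eq_or_lt with rfl | hlt
    · exact le_rfl
    · exact hmon.apply_le_of_eu_le (hsub (right_mem_Icc.mpr (by omega))) (hsub hb)
        (hbetter b (mem_Icc.mp hb).1 (by omega))
  have hcard : (#(Icc (vl / 2 - 1) (p - 1)) : ℝ) = (p : ℝ) - ((vl / 2 : ℕ) : ℝ) + 1 := by
    rw [Nat.card_Icc, Nat.cast_inj.mpr (show p - 1 + 1 - (vl / 2 - 1) = p - vl / 2 + 1 by omega)]
    push_cast [show vl / 2 ≤ p by omega]
    ring
  have hpos : (0 : ℝ) < (p : ℝ) - ((vl / 2 : ℕ) : ℝ) + 1 := by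
    rw [← hcard]; exact_mod_cast card_pos.mpr ⟨p - 1, right_mem_Icc.mpr (by omega)⟩
  rw [le_div_iff₀ hpos, mul_comm, ← hcard]
  exact hSl.card_mul_le_one hsub hmin

theorem stmt11 (vl vh pbar : ℕ) (hvl : 0 < vl) (hevl : Even vl) (hevh : Even vh)
    (hlt : vl < vh) (hpbar : vh / 2 + 2 ≤ pbar) (σl σh : ℕ → ℝ)
    (hSl : IsStrategy pbar σl) (hSh : IsStrategy pbar σh)
    (hmon : WPMon pbar vl σl σh) (p : ℕ)
    (hp1 : vl / 2 + 2 ≤ p) (hp2 : p ≤ vh / 2)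
    (hbetter : ∀ b, vl / 2 - 1 ≤ b → b ≤ p - 2 →
      eu pbar vl σh (p - 1) ≤ eu pbar vl σh b) :
    σl (p - 1) ≤ 1 / ((p : ℝ) - ((vl / 2 : ℕ) : ℝ) + 1) :=
  stmt11_general vl vh pbar hvl hevl hpbar σl σh hSl hmon p hp1 hp2 hbetter
end

section
/- Suppose a mechanism (M,φ) has, for every valuation profile, a Nash equilibrium (possibly mixed) that with probability one yields efficient and equitable allocations. Then for each profile v with v_l < v_h and each t ∈ {0,...,ES(v)−1}, there is an efficient Nash equilibrium σ of (M,φ,v) with v_l/2 + t ≤ π_l(σ) ≤ v_l/2 + t + 1. -/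
open Finset

/-- An allocation: the winner of the object (an agent in `Fin 2`) together with the
monetary transfer in `{0,...,pbar}` paid by the winner to the other agent. -/
abbrev Alloc (pbar : ℕ) := Fin 2 × Fin (pbar + 1)

/-- Utility of agent `i` with value `v` at allocation `a`: `v - p` if `i` receives
the object and pays `p`; `p` if `i` is paid `p`. -/
noncomputable def aUtil (pbar : ℕ) (i : Fin 2) (v : ℕ) (a : Alloc pbar) : ℝ :=
  if a.1 = i then (v : ℝ) - ((a.2 : ℕ) : ℝ) else ((a.2 : ℕ) : ℝ)

/-- A probability distribution on a finite type. -/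
def IsDist {α : Type*} [Fintype α] (f : α → ℝ) : Prop :=
  (∀ a, 0 ≤ f a) ∧ ∑ a, f a = 1

/-- Expected utility of agent 1 (index 0) with value `v` from sending message `m1`
when agent 2 plays the mixed strategy `σ2`. -/
noncomputable def mEU1 {M1 M2 : Type*} [Fintype M2] (pbar : ℕ)
    (φ : M1 → M2 → Alloc pbar → ℝ) (v : ℕ) (m1 : M1) (σ2 : M2 → ℝ) : ℝ :=
  ∑ m2, σ2 m2 * ∑ a, φ m1 m2 a * aUtil pbar 0 v a

/-- Expected utility of agent 2 (index 1) with value `v` from sending message `m2`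
when agent 1 plays the mixed strategy `σ1`. -/
noncomputable def mEU2 {M1 M2 : Type*} [Fintype M1] (pbar : ℕ)
    (φ : M1 → M2 → Alloc pbar → ℝ) (v : ℕ) (m2 : M2) (σ1 : M1 → ℝ) : ℝ :=
  ∑ m1, σ1 m1 * ∑ a, φ m1 m2 a * aUtil pbar 1 v a

/-- Nash equilibrium (possibly in mixed strategies) of the game induced by the
mechanism `φ` at the valuation profile `(v1, v2)`. -/
def MNash {M1 M2 : Type*} [Fintype M1] [Fintype M2] (pbar : ℕ)
    (φ : M1 → M2 → Alloc pbar → ℝ) (v1 v2 : ℕ) (σ1 : M1 → ℝ) (σ2 : M2 → ℝ) : Prop :=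
  IsDist σ1 ∧ IsDist σ2 ∧
  (∀ m1, 0 < σ1 m1 → ∀ m1', mEU1 pbar φ v1 m1' σ2 ≤ mEU1 pbar φ v1 m1 σ2) ∧
  (∀ m2, 0 < σ2 m2 → ∀ m2', mEU2 pbar φ v2 m2' σ1 ≤ mEU2 pbar φ v2 m2 σ1)

/-- Expected payoff of agent `i` with value `v` under the strategy profile `(σ1, σ2)`. -/
noncomputable def mPayoff {M1 M2 : Type*} [Fintype M1] [Fintype M2] (pbar : ℕ)
    (φ : M1 → M2 → Alloc pbar → ℝ) (i : Fin 2) (v : ℕ)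
    (σ1 : M1 → ℝ) (σ2 : M2 → ℝ) : ℝ :=
  ∑ m1, ∑ m2, σ1 m1 * σ2 m2 * ∑ a, φ m1 m2 a * aUtil pbar i v a

/-- An allocation is efficient and equitable for the valuation profile `(v1, v2)`:
the winner has the (weakly) highest valuation, and no agent prefers the other's
allotment to her own. -/
def GoodAlloc (pbar v1 v2 : ℕ) (a : Alloc pbar) : Prop :=
  (if a.1 = 0 then v2 ≤ v1 else v1 ≤ v2) ∧
  ((if a.1 = 0 then (v1 : ℝ) else (v2 : ℝ)) - ((a.2 : ℕ) : ℝ) ≥ ((a.2 : ℕ) : ℝ)) ∧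
  (((a.2 : ℕ) : ℝ) ≥ (if a.1 = 0 then (v2 : ℝ) else (v1 : ℝ)) - ((a.2 : ℕ) : ℝ))

/-- The profile `(σ1, σ2)` obtains with positive probability only allocations
satisfying `Q`. -/
def OnlyOutcomes {M1 M2 : Type*} (pbar : ℕ) (φ : M1 → M2 → Alloc pbar → ℝ)
    (σ1 : M1 → ℝ) (σ2 : M2 → ℝ) (Q : Alloc pbar → Prop) : Prop :=
  ∀ m1 m2 a, 0 < σ1 m1 → 0 < σ2 m2 → 0 < φ m1 m2 a → Q a

/-!
Set `c = v₁/2 + t` and take the efficient and equitable equilibrium `(σ₁, σ₂)` promised for the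
auxiliary profile `(2c, 2c + 2)`. There, equity forces agent 2 to win at a price in `[c, c + 1]`,
so agent 1's expected payoff lies in `[c, c + 1]`. Changing an agent's value from `v'` to `v`
shifts the expected utility of each of her messages by `(v - v') · P(win)`. On the support of
`σ₁`, agent 1 never wins, and her value drops from `2c` to `v₁ ≤ 2c`; on the support of `σ₂`,
agent 2 always wins, and her value rises from `2c + 2` to `v₂ ≥ 2c + 2`. In both cases the
equilibrium messages gain at least as much as any deviation, so `(σ₁, σ₂)` is still a Nash
equilibrium at `(v₁, v₂)`.
-/

section Lottery

variable {M β : Type*} [Fintype M] [Fintype β]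

theorem IsDist.sum_mul_le {f g : β → ℝ} {c : ℝ} (hf : IsDist f)
    (h : ∀ a, 0 < f a → g a ≤ c) : ∑ a, f a * g a ≤ c :=
  calc ∑ a, f a * g a ≤ ∑ a, f a * c := by
        refine sum_le_sum fun a _ => ?_
        rcases (hf.1 a).eq_or_lt with hzero | hpos
        · simp [← hzero]
        · exact mul_le_mul_of_nonneg_left (h a hpos) hpos.le
    _ = c := by rw [← sum_mul, hf.2, one_mul]

theorem IsDist.le_sum_mul {f g : β → ℝ} {c : ℝ} (hf : IsDist f)
    (h : ∀ a, 0 < f a → c ≤ g a) : c ≤ ∑ a, f a * g a := by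
  have := hf.sum_mul_le (g := fun a => -g a) (c := -c) fun a ha => neg_le_neg (h a ha)
  simpa only [mul_neg, sum_neg_distrib, neg_le_neg_iff] using this

noncomputable def lotteryExp (ψ : M → β → ℝ) (σ : M → ℝ) (g : β → ℝ) : ℝ :=
  ∑ m, σ m * ∑ a, ψ m a * g a

variable {ψ : M → β → ℝ} {σ : M → ℝ}

theorem lotteryExp_add_mul (g h : β → ℝ) (r : ℝ) :
    lotteryExp ψ σ (fun a => g a + r * h a) = lotteryExp ψ σ g + r * lotteryExp ψ σ h := by
  simp only [lotteryExp, mul_add, sum_add_distrib, mul_sum]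
  congr 1
  exact sum_congr rfl fun m _ => sum_congr rfl fun a _ => by ring

theorem lotteryExp_le {g : β → ℝ} {c : ℝ} (hσ : IsDist σ) (hψ : ∀ m, IsDist (ψ m))
    (h : ∀ m a, 0 < σ m → 0 < ψ m a → g a ≤ c) : lotteryExp ψ σ g ≤ c :=
  hσ.sum_mul_le fun m hm => (hψ m).sum_mul_le fun a ha => h m a hm ha

theorem le_lotteryExp {g : β → ℝ} {c : ℝ} (hσ : IsDist σ) (hψ : ∀ m, IsDist (ψ m))
    (h : ∀ m a, 0 < σ m → 0 < ψ m a → c ≤ g a) : c ≤ lotteryExp ψ σ g :=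
  hσ.le_sum_mul fun m hm => (hψ m).le_sum_mul fun a ha => h m a hm ha

end Lottery

section BestReply

variable {N M : Type*} [Fintype M] {pbar : ℕ}

noncomputable def winInd (i : Fin 2) (a : Alloc pbar) : ℝ :=
  if a.1 = i then 1 else 0

theorem aUtil_eq_add (i : Fin 2) (v v' : ℕ) (a : Alloc pbar) :
    aUtil pbar i v a = aUtil pbar i v' a + ((v : ℝ) - v') * winInd i a := by
  unfold aUtil winInd
  split_ifs <;> ring

theorem lotteryExp_aUtil_eq_add {ψ : M → Alloc pbar → ℝ} {σ : M → ℝ} (i : Fin 2) (v v' : ℕ) :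
    lotteryExp ψ σ (aUtil pbar i v) =
      lotteryExp ψ σ (aUtil pbar i v') + ((v : ℝ) - v') * lotteryExp ψ σ (winInd i) := by
  rw [← lotteryExp_add_mul]
  exact congrArg _ (funext (aUtil_eq_add i v v'))

/-- `ψ n m` is the lottery over allocations when agent `i` sends `n` and her opponent `m`. -/
def IsBestReply (i : Fin 2) (v : ℕ) (ψ : N → M → Alloc pbar → ℝ) (σ : M → ℝ) (n : N) : Prop :=
  ∀ n', lotteryExp (ψ n') σ (aUtil pbar i v) ≤ lotteryExp (ψ n) σ (aUtil pbar i v)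

variable {i : Fin 2} {v v' : ℕ} {ψ : N → M → Alloc pbar → ℝ} {σ : M → ℝ} {n : N}

theorem IsBestReply.of_le_of_never_wins (hbest : IsBestReply i v' ψ σ n) (hv : v ≤ v')
    (hσ : IsDist σ) (hψ : ∀ n m, IsDist (ψ n m))
    (hlose : ∀ m a, 0 < σ m → 0 < ψ n m a → a.1 ≠ i) : IsBestReply i v ψ σ n := by
  intro n'
  have hwin : lotteryExp (ψ n) σ (winInd i) ≤ 0 :=
    lotteryExp_le hσ (hψ n) fun m a hm ha => by simp [winInd, hlose m a hm ha]
  have hwin' : 0 ≤ lotteryExp (ψ n') σ (winInd i) :=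
    le_lotteryExp hσ (hψ n') fun _ a _ _ => by unfold winInd; split_ifs <;> norm_num
  have hdv : (v : ℝ) - v' ≤ 0 := by rw [sub_nonpos]; exact_mod_cast hv
  rw [lotteryExp_aUtil_eq_add i v v', lotteryExp_aUtil_eq_add i v v']
  nlinarith [hbest n']

theorem IsBestReply.of_le_of_always_wins (hbest : IsBestReply i v' ψ σ n) (hv : v' ≤ v)
    (hσ : IsDist σ) (hψ : ∀ n m, IsDist (ψ n m))
    (hwins : ∀ m a, 0 < σ m → 0 < ψ n m a → a.1 = i) : IsBestReply i v ψ σ n := by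
  intro n'
  have hwin : 1 ≤ lotteryExp (ψ n) σ (winInd i) :=
    le_lotteryExp hσ (hψ n) fun m a hm ha => by simp [winInd, hwins m a hm ha]
  have hwin' : lotteryExp (ψ n') σ (winInd i) ≤ 1 :=
    lotteryExp_le hσ (hψ n') fun _ a _ _ => by unfold winInd; split_ifs <;> norm_num
  have hdv : 0 ≤ (v : ℝ) - v' := by rw [sub_nonneg]; exact_mod_cast hv
  rw [lotteryExp_aUtil_eq_add i v v', lotteryExp_aUtil_eq_add i v v']
  nlinarith [hbest n']

end BestReply

section Mechanism

variable {M1 M2 : Type*} [Fintype M1] [Fintype M2] {pbar : ℕ} {φ : M1 → M2 → Alloc pbar → ℝ}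
  {σ1 : M1 → ℝ} {σ2 : M2 → ℝ}

theorem mNash_iff {v1 v2 : ℕ} :
    MNash pbar φ v1 v2 σ1 σ2 ↔ IsDist σ1 ∧ IsDist σ2 ∧
      (∀ m1, 0 < σ1 m1 → IsBestReply 0 v1 φ σ2 m1) ∧
      (∀ m2, 0 < σ2 m2 → IsBestReply 1 v2 (flip φ) σ1 m2) :=
  Iff.rfl

theorem mPayoff_eq_sum_lotteryExp (i : Fin 2) (v : ℕ) :
    mPayoff pbar φ i v σ1 σ2 = ∑ m1, σ1 m1 * lotteryExp (φ m1) σ2 (aUtil pbar i v) := by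
  simp only [mPayoff, lotteryExp, mul_sum, mul_assoc]

variable {i : Fin 2} {v : ℕ} {c : ℝ}

theorem mPayoff_le_of_onlyOutcomes (hσ1 : IsDist σ1) (hσ2 : IsDist σ2)
    (hφ : ∀ m1 m2, IsDist (φ m1 m2)) (h : OnlyOutcomes pbar φ σ1 σ2 (aUtil pbar i v · ≤ c)) :
    mPayoff pbar φ i v σ1 σ2 ≤ c := by
  rw [mPayoff_eq_sum_lotteryExp]
  exact hσ1.sum_mul_le fun m1 hm1 => lotteryExp_le hσ2 (hφ m1) (h m1 · · hm1)

theorem le_mPayoff_of_onlyOutcomes (hσ1 : IsDist σ1) (hσ2 : IsDist σ2)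
    (hφ : ∀ m1 m2, IsDist (φ m1 m2)) (h : OnlyOutcomes pbar φ σ1 σ2 (c ≤ aUtil pbar i v ·)) :
    c ≤ mPayoff pbar φ i v σ1 σ2 := by
  rw [mPayoff_eq_sum_lotteryExp]
  exact hσ1.le_sum_mul fun m1 hm1 => le_lotteryExp hσ2 (hφ m1) (h m1 · · hm1)

end Mechanism

theorem GoodAlloc.fst_eq_one_and_price_mem {pbar c : ℕ} {a : Alloc pbar}
    (h : GoodAlloc pbar (2 * c) (2 * c + 2) a) :
    a.1 = 1 ∧ (c : ℝ) ≤ ((a.2 : ℕ) : ℝ) ∧ ((a.2 : ℕ) : ℝ) ≤ c + 1 := by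
  obtain ⟨w, p⟩ := a
  obtain ⟨heff, hhi, hlo⟩ := h
  fin_cases w
  · simp at heff
  · simp only [Fin.mk_one, one_ne_zero, if_false] at hhi hlo
    push_cast at hhi hlo
    exact ⟨rfl, by linarith, by linarith⟩

theorem aUtil_zero_of_fst_eq_one {pbar v : ℕ} {a : Alloc pbar} (h : a.1 = 1) :
    aUtil pbar 0 v a = ((a.2 : ℕ) : ℝ) := by
  simp [aUtil, h]

theorem stmt17_general {M1 M2 : Type*} [Fintype M1] [Fintype M2]
    (pbar vbar : ℕ)
    (φ : M1 → M2 → Alloc pbar → ℝ) (hφ : ∀ m1 m2, IsDist (φ m1 m2))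
    (H : ∀ v1 v2 : ℕ, 0 < v1 → Even v1 → v1 ≤ vbar → 0 < v2 → Even v2 → v2 ≤ vbar →
      ∃ σ1 : M1 → ℝ, ∃ σ2 : M2 → ℝ, MNash pbar φ v1 v2 σ1 σ2 ∧
        OnlyOutcomes pbar φ σ1 σ2 (GoodAlloc pbar v1 v2)) :
    ∀ v1 v2 : ℕ, 0 < v1 → Even v1 → v1 ≤ vbar → Even v2 → v2 ≤ vbar → v1 < v2 →
      ∀ t, t < (v2 - v1) / 2 →
        ∃ σ1 : M1 → ℝ, ∃ σ2 : M2 → ℝ, MNash pbar φ v1 v2 σ1 σ2 ∧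
          OnlyOutcomes pbar φ σ1 σ2 (fun a => a.1 = 1) ∧
          ((v1 / 2 + t : ℕ) : ℝ) ≤ mPayoff pbar φ 0 v1 σ1 σ2 ∧
          mPayoff pbar φ 0 v1 σ1 σ2 ≤ ((v1 / 2 + t + 1 : ℕ) : ℝ) := by
  intro v1 v2 hv1pos ⟨k, hk⟩ _ _ hv2le _ t ht
  set c := v1 / 2 + t
  have hv1c : v1 ≤ 2 * c := by omega
  have hcv2 : 2 * c + 2 ≤ v2 := by omega
  obtain ⟨σ1, σ2, hnash, hgood⟩ := H (2 * c) (2 * c + 2) (by omega) ⟨c, by ring⟩ (by omega)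
    (by omega) ⟨c + 1, by ring⟩ (by omega)
  obtain ⟨hσ1, hσ2, hbest1, hbest2⟩ := mNash_iff.mp hnash
  have hout := fun m1 m2 a h1 h2 h3 => (hgood m1 m2 a h1 h2 h3).fst_eq_one_and_price_mem
  refine ⟨σ1, σ2, mNash_iff.mpr ⟨hσ1, hσ2, fun m1 hm1 => ?_, fun m2 hm2 => ?_⟩,
    fun m1 m2 a h1 h2 h3 => (hout m1 m2 a h1 h2 h3).1, ?_, ?_⟩
  · refine (hbest1 m1 hm1).of_le_of_never_wins hv1c hσ2 hφ fun m2 a h2 h3 => ?_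
    simp [(hout m1 m2 a hm1 h2 h3).1]
  · exact (hbest2 m2 hm2).of_le_of_always_wins hcv2 hσ1 (fun m2 m1 => hφ m1 m2)
      fun m1 a h1 h3 => (hout m1 m2 a h1 hm2 h3).1
  · refine le_mPayoff_of_onlyOutcomes hσ1 hσ2 hφ fun m1 m2 a h1 h2 h3 => ?_
    obtain ⟨hwin, hlo, -⟩ := hout m1 m2 a h1 h2 h3
    rw [aUtil_zero_of_fst_eq_one hwin]
    exact hlo
  · refine mPayoff_le_of_onlyOutcomes hσ1 hσ2 hφ fun m1 m2 a h1 h2 h3 => ?_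
    obtain ⟨hwin, -, hhi⟩ := hout m1 m2 a h1 h2 h3
    rw [aUtil_zero_of_fst_eq_one hwin]
    exact_mod_cast hhi

theorem stmt17 {M1 M2 : Type*} [Fintype M1] [Fintype M2]
    (pbar vbar : ℕ) (hpbar : vbar / 2 + 2 ≤ pbar)
    (φ : M1 → M2 → Alloc pbar → ℝ) (hφ : ∀ m1 m2, IsDist (φ m1 m2))
    (H : ∀ v1 v2 : ℕ, 0 < v1 → Even v1 → v1 ≤ vbar → 0 < v2 → Even v2 → v2 ≤ vbar →
      ∃ σ1 : M1 → ℝ, ∃ σ2 : M2 → ℝ, MNash pbar φ v1 v2 σ1 σ2 ∧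
        OnlyOutcomes pbar φ σ1 σ2 (GoodAlloc pbar v1 v2)) :
    ∀ v1 v2 : ℕ, 0 < v1 → Even v1 → v1 ≤ vbar → Even v2 → v2 ≤ vbar → v1 < v2 →
      ∀ t, t < (v2 - v1) / 2 →
        ∃ σ1 : M1 → ℝ, ∃ σ2 : M2 → ℝ, MNash pbar φ v1 v2 σ1 σ2 ∧
          OnlyOutcomes pbar φ σ1 σ2 (fun a => a.1 = 1) ∧
          ((v1 / 2 + t : ℕ) : ℝ) ≤ mPayoff pbar φ 0 v1 σ1 σ2 ∧
          mPayoff pbar φ 0 v1 σ1 σ2 ≤ ((v1 / 2 + t + 1 : ℕ) : ℝ) :=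
  stmt17_general pbar vbar φ hφ H
end

section
/- Let σ* be a mixed Nash equilibrium of a mechanism game (M,φ,v*) in which the agent with value v_h* receives the object with probability one. If v_l ≤ v_l* and v_h ≥ v_h*, then σ* is also a Nash equilibrium of (M,φ,(v_l,v_h)) (with the same assignment of roles), and it still gives the object to agent h with probability one. -/
/-!
On the equilibrium path agent `h` wins with probability one. Lowering `l`'s value from `v_l*`
to `v_l` leaves her payoff from every equilibrium message unchanged (she only ever loses,
and a loser's utility ignores her value) and can only lower her payoff from a deviation.
Raising `h`'s value by `d = v_h - v_h*` raises her payoff from every equilibrium message by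
exactly `d` (she always wins) and from a deviation by at most `d`. So both best-response
conditions survive, and since the strategies and the mechanism are unchanged, so do the
outcomes.
-/

open Finset

section Utility

variable {pbar : ℕ} (i : Fin 2)

lemma aUtil_of_ne {a : Alloc pbar} (ha : a.1 ≠ i) (v v' : ℕ) :
    aUtil pbar i v a = aUtil pbar i v' a := by
  simp only [aUtil, if_neg ha]

lemma aUtil_of_eq {a : Alloc pbar} (ha : a.1 = i) (v v' : ℕ) :
    aUtil pbar i v a = aUtil pbar i v' a + ((v : ℝ) - v') := by
  simp only [aUtil, if_pos ha]
  ring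

lemma aUtil_mono {v v' : ℕ} (h : v ≤ v') (a : Alloc pbar) :
    aUtil pbar i v a ≤ aUtil pbar i v' a := by
  have : (v : ℝ) ≤ v' := Nat.cast_le.mpr h
  unfold aUtil
  split <;> linarith

lemma aUtil_le_add_sub {v v' : ℕ} (h : v' ≤ v) (a : Alloc pbar) :
    aUtil pbar i v a ≤ aUtil pbar i v' a + ((v : ℝ) - v') := by
  have : (v' : ℝ) ≤ v := Nat.cast_le.mpr h
  unfold aUtil
  split <;> linarith

end Utility

namespace IsDist

variable {α : Type*} [Fintype α] {p : α → ℝ} (hp : IsDist p) {f g : α → ℝ} {c : ℝ}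
include hp

lemma sum_mul_add_const (g : α → ℝ) (c : ℝ) :
    ∑ a, p a * (g a + c) = ∑ a, p a * g a + c := by
  simp only [mul_add, sum_add_distrib, ← sum_mul, hp.2, one_mul]

lemma sum_mul_le_add (h : ∀ a, f a ≤ g a + c) :
    ∑ a, p a * f a ≤ ∑ a, p a * g a + c :=
  calc ∑ a, p a * f a ≤ ∑ a, p a * (g a + c) :=
        sum_le_sum fun a _ => mul_le_mul_of_nonneg_left (h a) (hp.1 a)
    _ = ∑ a, p a * g a + c := hp.sum_mul_add_const g c

lemma sum_mul_eq_add (h : ∀ a, 0 < p a → f a = g a + c) :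
    ∑ a, p a * f a = ∑ a, p a * g a + c :=
  calc ∑ a, p a * f a = ∑ a, p a * (g a + c) := sum_congr rfl fun a _ => by
        rcases (hp.1 a).eq_or_lt with h0 | hpos
        · rw [← h0, zero_mul, zero_mul]
        · rw [h a hpos]
    _ = ∑ a, p a * g a + c := hp.sum_mul_add_const g c

end IsDist

section ExpectedUtility

variable {M1 M2 : Type*} {pbar : ℕ} {φ : M1 → M2 → Alloc pbar → ℝ}
  (hφ : ∀ m1 m2, IsDist (φ m1 m2)) {v v' : ℕ} {c : ℝ}
include hφ

lemma mEU1_le_add [Fintype M2] {σ2 : M2 → ℝ} (hσ2 : IsDist σ2)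
    (h : ∀ a, aUtil pbar 0 v a ≤ aUtil pbar 0 v' a + c) (m1 : M1) :
    mEU1 pbar φ v m1 σ2 ≤ mEU1 pbar φ v' m1 σ2 + c :=
  hσ2.sum_mul_le_add fun m2 => (hφ m1 m2).sum_mul_le_add h

lemma mEU1_eq_add [Fintype M2] {σ2 : M2 → ℝ} (hσ2 : IsDist σ2) {m1 : M1}
    (h : ∀ m2, 0 < σ2 m2 → ∀ a, 0 < φ m1 m2 a → aUtil pbar 0 v a = aUtil pbar 0 v' a + c) :
    mEU1 pbar φ v m1 σ2 = mEU1 pbar φ v' m1 σ2 + c :=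
  hσ2.sum_mul_eq_add fun m2 hm2 => (hφ m1 m2).sum_mul_eq_add (h m2 hm2)

lemma mEU2_le_add [Fintype M1] {σ1 : M1 → ℝ} (hσ1 : IsDist σ1)
    (h : ∀ a, aUtil pbar 1 v a ≤ aUtil pbar 1 v' a + c) (m2 : M2) :
    mEU2 pbar φ v m2 σ1 ≤ mEU2 pbar φ v' m2 σ1 + c :=
  hσ1.sum_mul_le_add fun m1 => (hφ m1 m2).sum_mul_le_add h

lemma mEU2_eq_add [Fintype M1] {σ1 : M1 → ℝ} (hσ1 : IsDist σ1) {m2 : M2}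
    (h : ∀ m1, 0 < σ1 m1 → ∀ a, 0 < φ m1 m2 a → aUtil pbar 1 v a = aUtil pbar 1 v' a + c) :
    mEU2 pbar φ v m2 σ1 = mEU2 pbar φ v' m2 σ1 + c :=
  hσ1.sum_mul_eq_add fun m1 hm1 => (hφ m1 m2).sum_mul_eq_add (h m1 hm1)

end ExpectedUtility

theorem stmt18 {M1 M2 : Type*} [Fintype M1] [Fintype M2]
    (pbar : ℕ) (φ : M1 → M2 → Alloc pbar → ℝ) (hφ : ∀ m1 m2, IsDist (φ m1 m2))
    (vl vh vl' vh' : ℕ) (hl : vl ≤ vl') (hh : vh' ≤ vh)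
    (σ1 : M1 → ℝ) (σ2 : M2 → ℝ)
    (hN : MNash pbar φ vl' vh' σ1 σ2)
    (hwin : OnlyOutcomes pbar φ σ1 σ2 (fun a => a.1 = 1)) :
    MNash pbar φ vl vh σ1 σ2 ∧ OnlyOutcomes pbar φ σ1 σ2 (fun a => a.1 = 1)  := by
  obtain ⟨hσ1, hσ2, hbest1, hbest2⟩ := hN
  refine ⟨⟨hσ1, hσ2, fun m1 hm1 m1' => ?_, fun m2 hm2 m2' => ?_⟩, hwin⟩
  · have hdev := mEU1_le_add (c := 0) hφ hσ2
      (fun a => (aUtil_mono 0 hl a).trans_eq (add_zero _).symm) m1'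
    have hpath : mEU1 pbar φ vl m1 σ2 = mEU1 pbar φ vl' m1 σ2 + 0 :=
      mEU1_eq_add hφ hσ2 fun m2 hm2 a ha => by
        rw [add_zero, aUtil_of_ne 0 (by simp [hwin m1 m2 a hm1 hm2 ha])]
    linarith [hbest1 m1 hm1 m1']
  · have hdev := mEU2_le_add hφ hσ1 (aUtil_le_add_sub 1 hh) m2'
    have hpath : mEU2 pbar φ vh m2 σ1 = mEU2 pbar φ vh' m2 σ1 + ((vh : ℝ) - vh') :=
      mEU2_eq_add hφ hσ1 fun m1 hm1 a ha => aUtil_of_eq 1 (hwin m1 m2 a hm1 hm2 ha) vh vh'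
    linarith [hbest2 m2 hm2 m2']
end

section
/- In the winner-bid auction with v_l < v_h and ES(v) = (v_h − v_l)/2 = 2 and v_l > 3v_h/8, no Nash equilibrium with higher-agent payoff exactly v_h/2 + 1 (i.e., separating bid p = v_l/2 + 1 played as a pure strategy by the higher-valuation agent) is a limit of interior payoff monotone distributions; concretely, in any interior payoff monotone profile close to such σ, the higher-valuation agent places weakly more probability on v_l/2 than on v_l/2 + 1, contradicting that her support is {v_l/2+1}. -/
open Finset Filter

/-!
Write `v_l = 2m + 4`, so `v_h = 2m + 8` and the separating bid is `m + 3`. Against the pure bid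
`m + 3` the low agent gains exactly `1` by bidding `m` instead, so near the limit payoff
monotonicity gives `σ_l(m + 3) ≤ σ_l(m)`; bidding `m + 1` always weakly beats `m + 2` for her,
so also `σ_l(m + 2) ≤ σ_l(m + 1)`. For the high agent, raising the bid from `m + 2` to `m + 3`
gains `σ_l(m + 2) + σ_l(m + 3)` near ties and loses `1` against every lower bid, so it does not
pay; payoff monotonicity then gives `σ_h(m + 3) ≤ σ_h(m + 2)`, which passes to the limit as
`1 ≤ 0`.
-/

open Finset Filter

section Util

variable {v b c : ℕ}

theorem util_succ_sub_util_of_lt (hc : c < b) : util v (b + 1) c - util v b c = -1 := by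
  simp only [util, if_pos hc, if_pos (hc.trans (Nat.lt_succ_self b))]
  push_cast
  ring

theorem util_succ_sub_util_self : util v (b + 1) b - util v b b = (v : ℝ) / 2 - b - 1 := by
  simp only [util, if_pos (Nat.lt_succ_self b), lt_irrefl, if_false]
  push_cast
  ring

theorem util_succ_sub_util_succ :
    util v (b + 1) (b + 1) - util v b (b + 1) = (v : ℝ) / 2 - b - 1 := by
  simp only [util, lt_irrefl, if_false, if_neg (Nat.not_succ_lt_self), if_pos (Nat.lt_succ_self b)]
  push_cast
  ring

theorem util_succ_sub_util_of_succ_lt (hc : b + 1 < c) : util v (b + 1) c - util v b c = 0 := by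
  simp only [util, if_neg (show ¬c < b + 1 by omega), if_neg (show ¬c < b by omega), if_pos hc,
    if_pos (show b < c by omega), sub_self]

end Util

section ExpectedUtility

variable {pbar v b : ℕ} {τ : ℕ → ℝ}

theorem eu_succ_sub_eu (hb : b + 1 ≤ pbar) :
    eu pbar v τ (b + 1) - eu pbar v τ b =
      ((v : ℝ) / 2 - b - 1) * (τ b + τ (b + 1)) - ∑ c ∈ range b, τ c := by
  obtain ⟨n, hn⟩ : ∃ n, pbar + 1 = b + 2 + n := ⟨pbar - b - 1, by omega⟩
  rw [eu, eu, ← sum_sub_distrib]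
  simp_rw [← mul_sub]
  rw [hn, sum_range_add, sum_range_succ, sum_range_succ]
  have hlow : ∑ c ∈ range b, τ c * (util v (b + 1) c - util v b c) = -∑ c ∈ range b, τ c := by
    rw [← sum_neg_distrib]
    exact sum_congr rfl fun c hc => by
      rw [util_succ_sub_util_of_lt (mem_range.1 hc), mul_neg_one]
  have hhigh : ∑ c ∈ range n, τ (b + 2 + c) * (util v (b + 1) (b + 2 + c) - util v b (b + 2 + c))
      = 0 :=
    sum_eq_zero fun c _ => by rw [util_succ_sub_util_of_succ_lt (by omega), mul_zero]
  rw [hlow, hhigh, util_succ_sub_util_self, util_succ_sub_util_succ]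
  ring

theorem eu_succ_le_eu (hτ : ∀ c, 0 ≤ τ c) (hv : v ≤ 2 * (b + 1)) (hb : b + 1 ≤ pbar) :
    eu pbar v τ (b + 1) ≤ eu pbar v τ b := by
  have hcoef : (v : ℝ) / 2 - b - 1 ≤ 0 := by
    have : (v : ℝ) ≤ 2 * (b + 1) := by exact_mod_cast hv
    linarith
  have hties := mul_nonpos_of_nonpos_of_nonneg hcoef (add_nonneg (hτ b) (hτ (b + 1)))
  linarith [eu_succ_sub_eu (v := v) (τ := τ) hb, sum_nonneg fun c (_ : c ∈ range b) => hτ c]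

theorem eu_succ_le_eu_of_le (hτ : ∀ c, 0 ≤ τ c) (hv : v = 2 * b + 8) (hb : b + 3 ≤ pbar)
    (h₁ : τ (b + 2) ≤ τ (b + 1)) (h₂ : τ (b + 3) ≤ τ b) :
    eu pbar v τ (b + 3) ≤ eu pbar v τ (b + 2) := by
  have hdiff := eu_succ_sub_eu (v := v) (τ := τ) hb
  have hlower : τ b + τ (b + 1) ≤ ∑ c ∈ range (b + 2), τ c := by
    rw [sum_range_succ, sum_range_succ]
    linarith [sum_nonneg fun c (_ : c ∈ range b) => hτ c]
  subst hv
  push_cast at hdiff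
  linarith

theorem tendsto_eu {ι : Type*} {l : Filter ι} {σ : ι → ℕ → ℝ} {σ₀ : ℕ → ℝ}
    (h : ∀ c, Tendsto (fun k => σ k c) l (nhds (σ₀ c))) (b : ℕ) :
    Tendsto (fun k => eu pbar v (σ k) b) l (nhds (eu pbar v σ₀ b)) :=
  tendsto_finsetSum _ fun c _ => (h c).mul_const _

theorem IsStrategy.eq_zero_of_eq_one {b₀ c : ℕ} (hτ : IsStrategy pbar τ) (h₁ : τ b₀ = 1)
    (hc : c ≠ b₀) : τ c = 0 := by
  obtain ⟨hnonneg, hsum, hout⟩ := hτ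
  have hb₀ : b₀ ≤ pbar := by
    by_contra! h
    simp [hout b₀ h] at h₁
  by_cases hcp : c ≤ pbar
  · have hpair := add_le_sum (f := τ) (fun i _ => hnonneg i)
      (mem_range.2 (Nat.lt_succ_of_le hb₀)) (mem_range.2 (Nat.lt_succ_of_le hcp)) hc.symm
    rw [hsum, h₁] at hpair
    linarith [hnonneg c]
  · exact hout c (by omega)

theorem IsStrategy.eu_of_eq_one {b₀ : ℕ} (hτ : IsStrategy pbar τ) (h₁ : τ b₀ = 1) (b : ℕ) :
    eu pbar v τ b = util v b b₀ := by
  rw [eu, sum_eq_single b₀, h₁, one_mul]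
  · exact fun c _ hc => by rw [hτ.eq_zero_of_eq_one h₁ hc, zero_mul]
  · intro hb₀
    rw [hτ.2.2 b₀ (by simpa using hb₀)] at h₁
    exact absurd h₁ zero_ne_one

theorem PMon.le_of_eu_le {m n : ℕ} {σ : ℕ → ℝ} (h : PMon pbar v σ τ) (hm : m ≤ pbar)
    (hn : n ≤ pbar) (he : eu pbar v τ n ≤ eu pbar v τ m) : σ n ≤ σ m :=
  (h m (mem_range.2 (by omega)) n (mem_range.2 (by omega))).1 he

end ExpectedUtility

theorem stmt19_general (vl vh pbar : ℕ) (hevl : Even vl)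
    (hES : vh = vl + 4) (hratio : 3 * vh < 8 * vl) (hpbar : vh / 2 + 2 ≤ pbar)
    (σl σh : ℕ → ℝ) (hN : IsNash pbar vl vh σl σh)
    (hpure : σh (vl / 2 + 1) = 1)
    (s : ℕ → (ℕ → ℝ) × (ℕ → ℝ))
    (hs : ∀ n, IsStrategy pbar (s n).1 ∧ IsStrategy pbar (s n).2 ∧
      (∀ b ∈ range (pbar + 1), 0 < (s n).1 b) ∧
      (∀ b ∈ range (pbar + 1), 0 < (s n).2 b) ∧
      PMon pbar vl (s n).1 (s n).2 ∧ PMon pbar vh (s n).2 (s n).1)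
    (hconv : ∀ b, Tendsto (fun k => (s k).1 b) atTop (nhds (σl b)) ∧
                  Tendsto (fun k => (s k).2 b) atTop (nhds (σh b))) :
    False := by
  obtain ⟨m, rfl, rfl⟩ : ∃ m, vl = 2 * m + 4 ∧ vh = 2 * m + 8 := by
    obtain ⟨r, rfl⟩ := hevl
    exact ⟨r - 2, by omega, by omega⟩
  rw [show (2 * m + 4) / 2 + 1 = m + 3 by omega] at hpure
  obtain ⟨-, hσh, -, -⟩ := hN
  have hlow : ∀ᶠ k in atTop,
      eu pbar (2 * m + 4) (s k).2 (m + 3) < eu pbar (2 * m + 4) (s k).2 m := by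
    refine (tendsto_eu (fun c => (hconv c).2) _).eventually_lt
      (tendsto_eu (fun c => (hconv c).2) _) ?_
    rw [hσh.eu_of_eq_one hpure, hσh.eu_of_eq_one hpure]
    simp only [util, lt_irrefl, if_false, if_neg (show ¬m + 3 < m by omega),
      if_pos (show m < m + 3 by omega)]
    push_cast
    linarith
  have hhigh : ∀ᶠ k in atTop, (s k).2 (m + 3) ≤ (s k).2 (m + 2) := by
    filter_upwards [hlow] with k hk
    obtain ⟨⟨hl, -, -⟩, ⟨hh, -, -⟩, -, -, hPl, hPh⟩ := hs k
    have h₁ : (s k).1 (m + 2) ≤ (s k).1 (m + 1) :=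
      hPl.le_of_eu_le (by omega) (by omega) (eu_succ_le_eu hh (by omega) (by omega))
    have h₂ : (s k).1 (m + 3) ≤ (s k).1 m := hPl.le_of_eu_le (by omega) (by omega) hk.le
    exact hPh.le_of_eu_le (by omega) (by omega) (eu_succ_le_eu_of_le hl rfl (by omega) h₁ h₂)
  have hlim := le_of_tendsto_of_tendsto (hconv (m + 3)).2 (hconv (m + 2)).2 hhigh
  rw [hpure, hσh.eq_zero_of_eq_one hpure (by omega)] at hlim
  norm_num at hlim

theorem stmt19 (vl vh pbar : ℕ) (hvl : 0 < vl) (hevl : Even vl)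
    (hES : vh = vl + 4) (hratio : 3 * vh < 8 * vl) (hpbar : vh / 2 + 2 ≤ pbar)
    (σl σh : ℕ → ℝ) (hN : IsNash pbar vl vh σl σh)
    (hpure : σh (vl / 2 + 1) = 1)
    (s : ℕ → (ℕ → ℝ) × (ℕ → ℝ))
    (hs : ∀ n, IsStrategy pbar (s n).1 ∧ IsStrategy pbar (s n).2 ∧
      (∀ b ∈ range (pbar + 1), 0 < (s n).1 b) ∧
      (∀ b ∈ range (pbar + 1), 0 < (s n).2 b) ∧
      PMon pbar vl (s n).1 (s n).2 ∧ PMon pbar vh (s n).2 (s n).1)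
    (hconv : ∀ b, Tendsto (fun k => (s k).1 b) atTop (nhds (σl b)) ∧
                  Tendsto (fun k => (s k).2 b) atTop (nhds (σh b))) :
    False :=
  stmt19_general vl vh pbar hevl hES hratio hpbar σl σh hN hpure s hs hconv
end
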